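/- arXiv:1602.07828 — 2 statements merged into one kernel-verified Lean document; each statement's English description precedes it below -/
import Mathlib

section
/- A pseudo equality algebra (A, ∧, ∼, ∽, 1) is invariant if and only if (x∧y) ∼ y = x ∼ y and x ∽ (x∧y) = x ∽ y for all x, y ∈ A. -/
/-!
The operations witnessing invariance are forced to be `x → y = y ∼ x` and `x ⇝ y = x ∽ y`,
so invariance says that these satisfy the pseudo BCK axioms. Axioms (B1)–(B4) follow from (A6)
alone, and `x → y = 1` always gives `x ≤ y`; what remains is `x ≤ y ⇒ x → y = 1`. The identity
`(x∧y) ∼ y = x ∼ y` gives it via `x ∼ x = 1`; conversely, implications in a pseudo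
BCK-meet-semilattice are monotone in the consequent, and together with (A5) this yields the
identity.
-/

/-- A pseudo equality algebra (JK-algebra): a meet-semilattice with top element `⊤`
(playing the role of `1`) equipped with two equality operations `sim` (`∼`) and
`bsim` (`∽`) satisfying axioms (A2)–(A7). -/
class PseudoEqualityAlgebra (A : Type*) extends SemilatticeInf A, OrderTop A where
  sim : A → A → A
  bsim : A → A → A
  sim_self : ∀ x : A, sim x x = ⊤
  bsim_self : ∀ x : A, bsim x x = ⊤
  sim_top : ∀ x : A, sim x ⊤ = x
  top_bsim : ∀ x : A, bsim ⊤ x = x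
  A4a : ∀ x y z : A, x ≤ y → y ≤ z → sim x z ≤ sim y z
  A4b : ∀ x y z : A, x ≤ y → y ≤ z → sim x z ≤ sim x y
  A4c : ∀ x y z : A, x ≤ y → y ≤ z → bsim z x ≤ bsim z y
  A4d : ∀ x y z : A, x ≤ y → y ≤ z → bsim z x ≤ bsim y x
  A5a : ∀ x y z : A, sim x y ≤ sim (x ⊓ z) (y ⊓ z)
  A5b : ∀ x y z : A, bsim x y ≤ bsim (x ⊓ z) (y ⊓ z)
  A6a : ∀ x y z : A, sim x y ≤ bsim (sim z x) (sim z y)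
  A6b : ∀ x y z : A, bsim x y ≤ sim (bsim x z) (bsim y z)
  A7a : ∀ x y z : A, sim x y ≤ sim (sim x z) (sim y z)
  A7b : ∀ x y z : A, bsim x y ≤ bsim (bsim z x) (bsim z y)

open PseudoEqualityAlgebra

/-- A pair of binary operations `(imp, limp)` makes an ordered set with top into a
pseudo BCK-meet-semilattice (axioms (B1), (B2), (B6); (B3)–(B5) hold by the order). -/
def IsPseudoBCKPair {A : Type*} [SemilatticeInf A] [OrderTop A]
    (imp limp : A → A → A) : Prop :=
  (∀ x y z : A, imp x y ≤ limp (imp y z) (imp x z)) ∧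
  (∀ x y z : A, limp x y ≤ imp (limp y z) (limp x z)) ∧
  (∀ x y : A, x ≤ limp (imp x y) y) ∧
  (∀ x y : A, x ≤ imp (limp x y) y) ∧
  (∀ x y : A, x ≤ y ↔ imp x y = ⊤) ∧
  (∀ x y : A, x ≤ y ↔ limp x y = ⊤)

/-- A pseudo equality algebra `A` is invariant if there is a pseudo BCK-meet-semilattice
structure `(imp, limp)` on the same meet-semilattice such that `Φ` of it gives back `A`,
i.e. `x ∼ y = imp y x` and `x ∽ y = limp x y`. -/
def Invariant (A : Type*) [PseudoEqualityAlgebra A] : Prop :=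
  ∃ imp limp : A → A → A, IsPseudoBCKPair imp limp ∧
    (∀ x y : A, sim x y = imp y x) ∧ (∀ x y : A, bsim x y = limp x y)

namespace IsPseudoBCKPair

variable {A : Type*} [SemilatticeInf A] [OrderTop A] {imp limp : A → A → A}

theorem imp_top_le (h : IsPseudoBCKPair imp limp) (x : A) : imp ⊤ x ≤ x :=
  (h.2.2.2.2.2 _ _).2 (top_unique (h.2.2.1 ⊤ x))

theorem limp_top_le (h : IsPseudoBCKPair imp limp) (x : A) : limp ⊤ x ≤ x :=
  (h.2.2.2.2.1 _ _).2 (top_unique (h.2.2.2.1 ⊤ x))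

theorem imp_mono_right (h : IsPseudoBCKPair imp limp) (z : A) {x y : A} (hxy : x ≤ y) :
    imp z x ≤ imp z y :=
  calc imp z x ≤ limp (imp x y) (imp z y) := h.1 z x y
    _ = limp ⊤ (imp z y) := by rw [(h.2.2.2.2.1 x y).1 hxy]
    _ ≤ imp z y := h.limp_top_le _

theorem limp_mono_right (h : IsPseudoBCKPair imp limp) (z : A) {x y : A} (hxy : x ≤ y) :
    limp z x ≤ limp z y :=
  calc limp z x ≤ imp (limp x y) (limp z y) := h.2.1 z x y
    _ = imp ⊤ (limp z y) := by rw [(h.2.2.2.2.2 x y).1 hxy]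
    _ ≤ limp z y := h.imp_top_le _

end IsPseudoBCKPair

namespace PseudoEqualityAlgebra

variable {A : Type*} [PseudoEqualityAlgebra A]

theorem le_bsim_sim (x y : A) : x ≤ bsim (sim y x) y := by
  simpa only [sim_top] using A6a x ⊤ y

theorem le_sim_bsim (x y : A) : x ≤ sim y (bsim x y) := by
  simpa only [top_bsim] using A6b ⊤ x y

theorem le_of_sim_eq_top {x y : A} (h : sim y x = ⊤) : x ≤ y := by
  simpa only [h, top_bsim] using le_bsim_sim x y

theorem le_of_bsim_eq_top {x y : A} (h : bsim x y = ⊤) : x ≤ y := by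
  simpa only [h, sim_top] using le_sim_bsim x y

theorem sim_le_sim_inf_left (x y : A) : sim x y ≤ sim (x ⊓ y) y := by
  simpa only [inf_idem] using A5a x y y

theorem bsim_le_bsim_inf_right (x y : A) : bsim x y ≤ bsim x (x ⊓ y) := by
  simpa only [inf_idem, inf_comm y x] using A5b x y x

theorem invariant_iff_isPseudoBCKPair :
    Invariant A ↔ IsPseudoBCKPair (fun x y : A => sim y x) bsim := by
  constructor
  · rintro ⟨imp, limp, hBCK, hsim, hbsim⟩
    have himp : imp = fun x y => sim y x := funext₂ fun x y => (hsim y x).symm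
    have hlimp : limp = bsim := funext₂ fun x y => (hbsim x y).symm
    rwa [himp, hlimp] at hBCK
  · intro hBCK
    exact ⟨_, _, hBCK, fun _ _ => rfl, fun _ _ => rfl⟩

theorem isPseudoBCKPair_iff :
    IsPseudoBCKPair (fun x y : A => sim y x) bsim ↔
      ∀ x y : A, sim (x ⊓ y) y = sim x y ∧ bsim x (x ⊓ y) = bsim x y := by
  constructor
  · intro hBCK x y
    exact ⟨le_antisymm (hBCK.imp_mono_right y inf_le_left) (sim_le_sim_inf_left x y),
      le_antisymm (hBCK.limp_mono_right x inf_le_right) (bsim_le_bsim_inf_right x y)⟩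
  · intro H
    refine ⟨fun x y z => A6a y x z, fun x y z => A6b x y z, le_bsim_sim, le_sim_bsim,
      fun x y => ⟨fun hxy => ?_, le_of_sim_eq_top⟩,
      fun x y => ⟨fun hxy => ?_, le_of_bsim_eq_top⟩⟩
    · simpa only [inf_eq_right.2 hxy, sim_self] using ((H y x).1).symm
    · simpa only [inf_eq_left.2 hxy, bsim_self] using ((H x y).2).symm

end PseudoEqualityAlgebra

/-- Proposition 2.15: a pseudo equality algebra is invariant iff
`(x∧y) ∼ y = x ∼ y` and `x ∽ (x∧y) = x ∽ y` for all `x, y`. -/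
theorem stmt6 {A : Type*} [PseudoEqualityAlgebra A] :
    Invariant A ↔
      ∀ x y : A, sim (x ⊓ y) y = sim x y ∧ bsim x (x ⊓ y) = bsim x y :=
  invariant_iff_isPseudoBCKPair.trans isPseudoBCKPair_iff
end

section
/- Let (A, ∧, ∼, ∽, 1) be a pseudo equality algebra and σ: A → A an internal state of type I or of type II on A, with kernel Ker(σ) = {x ∈ A : σ(x) = 1}. Then: (1) Ker(σ) ∩ σ(A) = {1}; (2) Ker(σ) is a deductive system of A; (3) if σ is strong, i.e., σ(x ∼ y) = σ(x ∽ y) for all x, y ∈ A, then Ker(σ) is a normal deductive system of A. -/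
open PseudoEqualityAlgebra

/-- An internal state of type I on a pseudo equality algebra:
axioms (IS1), (IS2), (IS3), (IS4). -/
def IsInternalStateI {A : Type*} [PseudoEqualityAlgebra A] (σ : A → A) : Prop :=
  (∀ x y : A, x ≤ y → σ x ≤ σ y) ∧
  (∀ x y : A,
    σ (sim (x ⊓ y) x) = sim (σ y) (σ (bsim (sim (x ⊓ y) x) y)) ∧
    σ (bsim x (x ⊓ y)) = bsim (σ (sim y (bsim x (x ⊓ y)))) (σ y)) ∧
  (∀ x y : A,
    σ (sim (σ x) (σ y)) = sim (σ x) (σ y) ∧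
    σ (bsim (σ x) (σ y)) = bsim (σ x) (σ y)) ∧
  (∀ x y : A, σ (σ x ⊓ σ y) = σ x ⊓ σ y)

/-- An internal state of type II on a pseudo equality algebra:
axioms (IS1), (IS2'), (IS3), (IS4). -/
def IsInternalStateII {A : Type*} [PseudoEqualityAlgebra A] (σ : A → A) : Prop :=
  (∀ x y : A, x ≤ y → σ x ≤ σ y) ∧
  (∀ x y : A,
    σ (sim (x ⊓ y) x) = sim (σ y) (σ (bsim (sim (x ⊓ y) y) x)) ∧
    σ (bsim x (x ⊓ y)) = bsim (σ (sim x (bsim y (x ⊓ y)))) (σ y)) ∧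
  (∀ x y : A,
    σ (sim (σ x) (σ y)) = sim (σ x) (σ y) ∧
    σ (bsim (σ x) (σ y)) = bsim (σ x) (σ y)) ∧
  (∀ x y : A, σ (σ x ⊓ σ y) = σ x ⊓ σ y)

/-- A deductive system of a pseudo equality algebra. -/
def IsDeductiveSystemEq {A : Type*} [PseudoEqualityAlgebra A] (D : Set A) : Prop :=
  (⊤ : A) ∈ D ∧
  (∀ x y : A, x ∈ D → x ≤ y → y ∈ D) ∧
  (∀ x y : A, x ∈ D → sim y x ∈ D → y ∈ D)

/-- A normal deductive system of a pseudo equality algebra. -/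
def IsNormalDeductiveSystemEq {A : Type*} [PseudoEqualityAlgebra A] (D : Set A) : Prop :=
  IsDeductiveSystemEq D ∧
  ∀ x y : A, (sim x y ∈ D ∧ sim y x ∈ D) ↔ (bsim y x ∈ D ∧ bsim x y ∈ D)

namespace PseudoEqualityAlgebra

variable {A : Type*} [PseudoEqualityAlgebra A]

theorem le_bsim_of_le {a b : A} (h : a ≤ b) : a ≤ bsim b a := by
  simpa only [top_bsim] using A4d a b ⊤ h le_top

theorem le_sim_inf_left (x y : A) : y ≤ sim (x ⊓ y) x := by
  simpa only [sim_top, top_inf_eq, inf_comm y x] using A5a y ⊤ x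

theorem le_sim_inf_right (x y : A) : x ≤ sim (x ⊓ y) y := by
  simpa only [sim_top, top_inf_eq] using A5a x ⊤ y

theorem sim_le_sim_inf (x y : A) : sim y x ≤ sim (x ⊓ y) x := by
  simpa only [inf_idem, inf_comm y x] using A5a y x x

theorem le_bsim_sim_inf (x y : A) : x ≤ bsim (sim (x ⊓ y) x) y :=
  calc x ≤ bsim (sim (x ⊓ y) x) (x ⊓ y) := by simpa only [sim_top] using A6a x ⊤ (x ⊓ y)
    _ ≤ bsim (sim (x ⊓ y) x) y := A4c _ _ _ inf_le_right (le_sim_inf_left x y)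

end PseudoEqualityAlgebra

section Kernel

variable {A : Type*} [PseudoEqualityAlgebra A] {σ : A → A}

theorem Monotone.eq_top_of_le {s t : A} (hmono : Monotone σ) (hs : σ s = ⊤) (hst : s ≤ t) :
    σ t = ⊤ :=
  top_unique (hs ▸ hmono hst)

theorem map_map_of_map_sim (htop : σ ⊤ = ⊤)
    (hsim : ∀ x y : A, σ (sim (σ x) (σ y)) = sim (σ x) (σ y)) (x : A) : σ (σ x) = σ x := by
  simpa only [htop, sim_top] using hsim x ⊤

theorem ker_inter_range_eq (htop : σ ⊤ = ⊤) (hidem : ∀ x : A, σ (σ x) = σ x) :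
    {x : A | σ x = ⊤} ∩ Set.range σ = {⊤} := by
  ext z
  constructor
  · rintro ⟨hz, w, rfl⟩
    exact (hidem w).symm.trans hz
  · rintro rfl
    exact ⟨htop, ⊤, htop⟩

theorem isDeductiveSystemEq_ker (hmono : Monotone σ) (htop : σ ⊤ = ⊤)
    (hmp : ∀ x y : A, σ x = ⊤ → σ (sim y x) = ⊤ → σ y = ⊤) :
    IsDeductiveSystemEq {x : A | σ x = ⊤} :=
  ⟨htop, fun _ _ hs hst => hmono.eq_top_of_le hs hst, hmp⟩

theorem isNormalDeductiveSystemEq_ker (hD : IsDeductiveSystemEq {x : A | σ x = ⊤})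
    (hstrong : ∀ x y : A, σ (sim x y) = σ (bsim x y)) :
    IsNormalDeductiveSystemEq {x : A | σ x = ⊤} := by
  refine ⟨hD, fun x y => ?_⟩
  simp only [Set.mem_ofPred_eq, hstrong]
  exact and_comm

end Kernel

namespace IsInternalStateI

variable {A : Type*} [PseudoEqualityAlgebra A] {σ : A → A} (h : IsInternalStateI σ)
include h

theorem monotone : Monotone σ := fun x y => h.1 x y

theorem map_top : σ ⊤ = ⊤ := by
  simpa only [inf_idem, sim_self, top_bsim] using (h.2.1 ⊤ ⊤).1

theorem map_map (x : A) : σ (σ x) = σ x :=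
  map_map_of_map_sim h.map_top (fun x y => (h.2.2.1 x y).1) x

theorem eq_top_of_map_sim {x y : A} (hx : σ x = ⊤) (hyx : σ (sim y x) = ⊤) : σ y = ⊤ := by
  have hu := h.monotone.eq_top_of_le hyx (sim_le_sim_inf x y)
  have hb := h.monotone.eq_top_of_le hx (le_bsim_sim_inf x y)
  simpa only [hu, hb, sim_top] using ((h.2.1 x y).1).symm

end IsInternalStateI

namespace IsInternalStateII

variable {A : Type*} [PseudoEqualityAlgebra A] {σ : A → A} (h : IsInternalStateII σ)
include h

theorem monotone : Monotone σ := fun x y => h.1 x y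

theorem map_top : σ ⊤ = ⊤ := by
  simpa only [inf_idem, sim_self, top_bsim] using (h.2.1 ⊤ ⊤).1

theorem map_map (x : A) : σ (σ x) = σ x :=
  map_map_of_map_sim h.map_top (fun x y => (h.2.2.1 x y).1) x

theorem eq_top_of_map_sim {x y : A} (hx : σ x = ⊤) (hyx : σ (sim y x) = ⊤) : σ y = ⊤ := by
  have hu := h.monotone.eq_top_of_le hyx (sim_le_sim_inf x y)
  have hb := h.monotone.eq_top_of_le hx (le_bsim_of_le (le_sim_inf_right x y))
  simpa only [hu, hb, sim_top] using ((h.2.1 x y).1).symm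

end IsInternalStateII

/-- Proposition 6.8: let `σ` be an internal state of type I or type II on a pseudo equality
algebra `A`. Then (1) `Ker(σ) ∩ σ(A) = {1}`; (2) `Ker(σ)` is a deductive system of `A`;
(3) if `σ` is strong then `Ker(σ)` is a normal deductive system of `A`. -/
theorem stmt15 {A : Type*} [PseudoEqualityAlgebra A] (σ : A → A)
    (hσ : IsInternalStateI σ ∨ IsInternalStateII σ) :
    ({x : A | σ x = ⊤} ∩ Set.range σ = {(⊤ : A)}) ∧
    IsDeductiveSystemEq {x : A | σ x = ⊤} ∧
    ((∀ x y : A, σ (sim x y) = σ (bsim x y)) →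
      IsNormalDeductiveSystemEq {x : A | σ x = ⊤}) := by
  obtain ⟨hmono, htop, hidem, hmp⟩ : Monotone σ ∧ σ ⊤ = ⊤ ∧ (∀ x, σ (σ x) = σ x) ∧
      ∀ x y, σ x = ⊤ → σ (sim y x) = ⊤ → σ y = ⊤ := by
    rcases hσ with h | h
    · exact ⟨h.monotone, h.map_top, h.map_map, fun _ _ => h.eq_top_of_map_sim⟩
    · exact ⟨h.monotone, h.map_top, h.map_map, fun _ _ => h.eq_top_of_map_sim⟩
  have hD := isDeductiveSystemEq_ker hmono htop hmp
  exact ⟨ker_inter_range_eq htop hidem, hD, isNormalDeductiveSystemEq_ker hD⟩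
end
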